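/- Let G be a simple graph on n vertices with m edges, and let S_k be a set of k vertices of G of largest degrees. Suppose BC_k(G) fails, i.e., s_k(G) > m + (k+1 choose 2). Then the number of non-adjacent (unordered) pairs of vertices inside S_k is at most k√(2n) − k, and the number of edges of G with both endpoints in V(G)∖S_k is at most k√(2n) − k. Consequently, there is a split graph with clique side S_k and independent side V(G)∖S_k differing from G in at most k√(8n) − 2k edges, so the splittance satisfies σ(G) < k√(8n). -/

import Mathlib

/-!
Let `P` be the number of non-edges inside `S` and `Q` the number of edges outside `S`.
Counting ordered pairs of vertices gives `∑_{v ∈ S} deg v + P + Q = m + C(k, 2)`.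
In an orthonormal eigenbasis `b` of the Laplacian, `λᵢ = ∑ᵥ deg v · bᵢ(v)² - bᵢᵀ A bᵢ`; this gives
`s_k ≤ ∑_{v ∈ S} deg v + √(2km)`, and `λᵢ ≤ n` gives `s_k ≤ kn`. If `s_k > m + C(k + 1, 2)`, the
first bound forces `P + Q + k < √(2km)` and the second `m < kn`, whence `P + Q + k < k√(2n)`.
Finally, turning `S` into a clique and deleting the edges outside `S` costs `P + Q` edits.
-/

open Finset

namespace Brouwer

variable {V : Type*}

/-- The sum of the `k` largest values of `f` on a finite type, expressed as the
supremum over all `k`-element subsets of the sum of `f` over the subset. -/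
noncomputable def sumKLargest [Fintype V] (f : V → ℝ) (k : ℕ) : ℝ :=
  sSup { x : ℝ | ∃ T : Finset V, T.card = k ∧ ∑ i ∈ T, f i = x }

/-- The Laplacian matrix of a finite simple graph is Hermitian (real symmetric). -/
theorem lapMatrix_isHermitian [Fintype V] [DecidableEq V] (G : SimpleGraph V)
    [DecidableRel G.Adj] : (G.lapMatrix ℝ).IsHermitian := by
  rw [Matrix.IsHermitian, Matrix.conjTranspose_eq_transpose_of_trivial]
  exact G.isSymm_lapMatrix (R := ℝ)

/-- The adjacency matrix of a finite simple graph is Hermitian (real symmetric). -/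
theorem adjMatrix_isHermitian [Fintype V] [DecidableEq V] (G : SimpleGraph V)
    [DecidableRel G.Adj] : (G.adjMatrix ℝ).IsHermitian := by
  rw [Matrix.IsHermitian, Matrix.conjTranspose_eq_transpose_of_trivial]
  exact G.isSymm_adjMatrix

/-- The (multiset of) eigenvalues of the Laplacian matrix of `G`, indexed by vertices. -/
noncomputable def lapEig [Fintype V] [DecidableEq V] (G : SimpleGraph V) : V → ℝ := by
  classical exact (lapMatrix_isHermitian G).eigenvalues

/-- The (multiset of) eigenvalues of the adjacency matrix of `G`, indexed by vertices. -/
noncomputable def adjEig [Fintype V] [DecidableEq V] (G : SimpleGraph V) : V → ℝ := by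
  classical exact (adjMatrix_isHermitian G).eigenvalues

/-- `sLap G k` is `s_k(G)`, the sum of the `k` largest Laplacian eigenvalues of `G`. -/
noncomputable def sLap [Fintype V] [DecidableEq V] (G : SimpleGraph V) (k : ℕ) : ℝ :=
  sumKLargest (lapEig G) k

/-- The number of edges of `G`. -/
noncomputable def numEdges [Fintype V] (G : SimpleGraph V) : ℕ := by
  classical exact G.edgeFinset.card

/-- `BC G k`: Brouwer's conjectured inequality `s_k(G) ≤ m + (k+1 choose 2)`. -/
def BC [Fintype V] [DecidableEq V] (G : SimpleGraph V) (k : ℕ) : Prop :=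
  sLap G k ≤ numEdges G + (k + 1).choose 2

/-- Number of edges of `G` with both endpoints in `S`. -/
noncomputable def edgesWithin [Fintype V] [DecidableEq V] (G : SimpleGraph V)
    (S : Finset V) : ℕ := by
  classical exact (G.edgeFinset.filter (fun e => ∀ v ∈ e, v ∈ S)).card

/-- The adjacency spectral radius of `G`, i.e. the largest adjacency eigenvalue. -/
noncomputable def specRad [Fintype V] [DecidableEq V] (G : SimpleGraph V) : ℝ :=
  sumKLargest (adjEig G) 1

/-- The maximum subgraph spectral density `t(G)`:
the supremum of `ρ(G[S])/|S|` over nonempty vertex subsets `S`. -/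
noncomputable def maxDensity [Fintype V] [DecidableEq V] (G : SimpleGraph V) : ℝ :=
  sSup { x : ℝ | ∃ S : Finset V, S.Nonempty ∧
    x = specRad (G.induce (↑S : Set V)) / (S.card : ℝ) }

/-- Edge-edit distance between two graphs on the same vertex set. -/
noncomputable def editDistance [Fintype V] (G H : SimpleGraph V) : ℕ := by
  classical exact (symmDiff G.edgeFinset H.edgeFinset).card

/-- A split graph: the vertex set partitions into a clique and an independent set. -/
def IsSplit (G : SimpleGraph V) : Prop :=
  ∃ C : Set V, G.IsClique C ∧ Gᶜ.IsClique Cᶜ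

/-- The splittance of `G`: the least number of edge edits needed to reach a split graph. -/
noncomputable def splittance [Fintype V] (G : SimpleGraph V) : ℕ :=
  sInf { d : ℕ | ∃ H : SimpleGraph V, IsSplit H ∧ editDistance G H = d }

/-- The join `G + K₁` of `G` with one new vertex adjacent to every vertex of `G`. -/
def joinOne (G : SimpleGraph V) : SimpleGraph (Option V) where
  Adj x y := x ≠ y ∧ ∀ a, x = some a → ∀ b, y = some b → G.Adj a b
  symm := by
    constructor
    rintro x y ⟨hxy, h⟩
    exact ⟨hxy.symm, fun a ha b hb => (h b hb a ha).symm⟩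
  loopless := by constructor; rintro x ⟨hxx, -⟩; exact hxx rfl

end Brouwer

open Matrix

lemma Finset.sum_mul_le_sum_of_sum_eq_card {ι R : Type*} [Fintype ι] [CommRing R] [LinearOrder R]
    [IsStrictOrderedRing R] (S : Finset ι) {f t : ι → R} (ht0 : ∀ i, 0 ≤ t i) (ht1 : ∀ i, t i ≤ 1)
    (hsum : ∑ i, t i = #S) (hS : ∀ i ∈ S, ∀ j ∉ S, f j ≤ f i) :
    ∑ i, f i * t i ≤ ∑ i ∈ S, f i := by
  classical
  rcases S.eq_empty_or_nonempty with rfl | hne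
  · have ht : ∀ i, t i = 0 := fun i =>
      (sum_eq_zero_iff_of_nonneg fun i _ => ht0 i).1 (by simpa using hsum) i (mem_univ i)
    simp [ht]
  obtain ⟨i₀, hi₀, hmin⟩ := S.exists_min_image f hne
  have hpt : ∀ i, f i * t i
      ≤ (if i ∈ S then f i else 0) + f i₀ * (t i - if i ∈ S then 1 else 0) := by
    intro i
    by_cases hi : i ∈ S
    · simp only [hi, if_true]
      nlinarith [hmin i hi, ht1 i]
    · simp only [hi, if_false]
      nlinarith [hS i₀ hi₀ i hi, ht0 i]
  calc ∑ i, f i * t i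
      ≤ ∑ i, ((if i ∈ S then f i else 0) + f i₀ * (t i - if i ∈ S then 1 else 0)) :=
        sum_le_sum fun i _ => hpt i
    _ = ∑ i ∈ S, f i := by simp [sum_add_distrib, ← mul_sum, sum_sub_distrib, hsum]

lemma Finset.offDiag_card_eq_two_mul_choose_two {α : Type*} [DecidableEq α] (s : Finset α) :
    #s.offDiag = 2 * (#s).choose 2 := by
  rw [offDiag_card, Nat.choose_two_right, Nat.mul_div_cancel' (Nat.even_mul_pred_self _).two_dvd,
    Nat.mul_sub_one]

namespace OrthonormalBasis

variable {ι V : Type*} [Fintype ι] [Fintype V] (b : OrthonormalBasis ι ℝ (EuclideanSpace ℝ V))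

lemma sum_apply_sq (i : ι) : ∑ v, b i v ^ 2 = 1 := by
  rw [← EuclideanSpace.real_norm_sq_eq, b.norm_eq_one, one_pow]

lemma sum_sq_apply [DecidableEq V] (v : V) : ∑ i, b i v ^ 2 = 1 := by
  simpa [EuclideanSpace.inner_single_left] using b.sum_sq_inner_left (EuclideanSpace.single v 1)

lemma sum_sum_mulVec_sq (B : Matrix V V ℝ) :
    ∑ i, ∑ v, (B *ᵥ b i) v ^ 2 = ∑ v, ∑ u, B v u ^ 2 := by
  rw [sum_comm]
  refine sum_congr rfl fun v _ => ?_
  simpa [EuclideanSpace.real_norm_sq_eq, mulVec, dotProduct, PiLp.inner_apply, mul_comm] using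
    b.sum_sq_inner_left (WithLp.toLp 2 (B v))

lemma sq_dotProduct_mulVec_le (B : Matrix V V ℝ) (i : ι) :
    (b i ⬝ᵥ (B *ᵥ b i)) ^ 2 ≤ ∑ v, (B *ᵥ b i) v ^ 2 := by
  simpa only [b.sum_apply_sq, one_mul, dotProduct] using
    sum_mul_sq_le_sq_mul_sq univ (b i) (B *ᵥ b i)

lemma abs_sum_dotProduct_mulVec_le (B : Matrix V V ℝ) (T : Finset ι) :
    |∑ i ∈ T, b i ⬝ᵥ (B *ᵥ b i)| ≤ √(#T * ∑ v, ∑ u, B v u ^ 2) := by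
  rw [← Real.sqrt_sq_eq_abs]
  refine Real.sqrt_le_sqrt (sq_sum_le_card_mul_sum_sq.trans ?_)
  gcongr
  calc ∑ i ∈ T, (b i ⬝ᵥ (B *ᵥ b i)) ^ 2
      ≤ ∑ i ∈ T, ∑ v, (B *ᵥ b i) v ^ 2 := sum_le_sum fun i _ => b.sq_dotProduct_mulVec_le B i
    _ ≤ ∑ i, ∑ v, (B *ᵥ b i) v ^ 2 :=
      sum_le_sum_of_subset_of_nonneg (subset_univ T) fun _ _ _ => by positivity
    _ = ∑ v, ∑ u, B v u ^ 2 := b.sum_sum_mulVec_sq B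

end OrthonormalBasis

lemma Matrix.IsHermitian.eigenvalues_eq_dotProduct {n : Type*} [Fintype n] [DecidableEq n]
    {A : Matrix n n ℝ} (hA : A.IsHermitian) (i : n) :
    hA.eigenvalues i = hA.eigenvectorBasis i ⬝ᵥ (A *ᵥ hA.eigenvectorBasis i) := by
  simpa using hA.eigenvalues_eq i

namespace SimpleGraph

variable {V : Type*} [Fintype V] (G : SimpleGraph V) [DecidableRel G.Adj]

lemma sum_sum_adjMatrix_sq : ∑ v, ∑ u, G.adjMatrix ℝ v u ^ 2 = 2 * #G.edgeFinset := by
  simp_rw [adjMatrix_apply, ite_pow, one_pow, zero_pow two_ne_zero, ← degree_eq_sum_if_adj]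
  exact_mod_cast G.sum_degrees_eq_twice_card_edges

variable [DecidableEq V]

lemma dotProduct_lapMatrix_mulVec (x : V → ℝ) :
    x ⬝ᵥ (G.lapMatrix ℝ *ᵥ x) = ∑ v, G.degree v * x v ^ 2 - x ⬝ᵥ (G.adjMatrix ℝ *ᵥ x) := by
  simp [lapMatrix, sub_mulVec, dotProduct_sub, dotProduct_mulVec_degMatrix, sq, mul_assoc]

/-- `xᵀ L x = ½ ∑_{i ~ j} (xᵢ - xⱼ)²` is at most the same sum over all pairs, which is
`n ‖x‖² - (∑ xᵢ)²`. -/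
lemma dotProduct_lapMatrix_mulVec_le (x : V → ℝ) :
    x ⬝ᵥ (G.lapMatrix ℝ *ᵥ x) ≤ Fintype.card V * ∑ v, x v ^ 2 := by
  have hall : ∑ i, ∑ j, (x i - x j) ^ 2
      = 2 * (Fintype.card V * ∑ v, x v ^ 2 - (∑ v, x v) ^ 2) := by
    simp only [sub_sq, sum_add_distrib, sum_sub_distrib, sum_const, card_univ, nsmul_eq_mul,
      ← mul_sum, ← sum_mul]
    ring
  have hadj : ∑ i, ∑ j, (if G.Adj i j then (x i - x j) ^ 2 else 0)
      ≤ ∑ i, ∑ j, (x i - x j) ^ 2 :=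
    sum_le_sum fun i _ => sum_le_sum fun j _ => by split_ifs; exacts [le_rfl, sq_nonneg _]
  have hform := G.lapMatrix_toLinearMap₂' ℝ x
  rw [toLinearMap₂'_apply'] at hform
  nlinarith [sq_nonneg (∑ v, x v)]

end SimpleGraph

namespace Brouwer

open SimpleGraph

variable {V : Type*}

def toSplit (G : SimpleGraph V) (S : Set V) : SimpleGraph V :=
  fromRel fun u v => u ∈ S ∧ (v ∈ S ∨ G.Adj u v)

lemma toSplit_adj {G : SimpleGraph V} {S : Set V} {u v : V} :
    (toSplit G S).Adj u v ↔ u ≠ v ∧ (u ∈ S ∧ v ∈ S ∨ G.Adj u v ∧ (u ∈ S ∨ v ∈ S)) := by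
  simp only [toSplit, fromRel_adj, G.adj_comm v u]
  tauto

lemma isClique_toSplit (G : SimpleGraph V) (S : Set V) : (toSplit G S).IsClique S :=
  fun _ hu _ hv huv => toSplit_adj.2 ⟨huv, .inl ⟨hu, hv⟩⟩

lemma isClique_compl_toSplit (G : SimpleGraph V) (S : Set V) : (toSplit G S)ᶜ.IsClique Sᶜ :=
  fun _ hu _ hv huv => by simp_all [toSplit_adj]

section Finite

variable [Fintype V]

lemma numEdges_eq (G : SimpleGraph V) [Fintype G.edgeSet] : numEdges G = #G.edgeFinset := by
  unfold numEdges; congr!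

lemma two_mul_numEdges (G : SimpleGraph V) [DecidableRel G.Adj] :
    2 * numEdges G = #{x : V × V | G.Adj x.1 x.2} := by
  rw [numEdges_eq, two_mul_card_edgeFinset]

lemma sumKLargest_le {f : V → ℝ} {k : ℕ} {c : ℝ} (hk : k ≤ Fintype.card V)
    (h : ∀ T : Finset V, #T = k → ∑ i ∈ T, f i ≤ c) : sumKLargest f k ≤ c := by
  obtain ⟨T, -, hT⟩ := exists_subset_card_eq (s := (univ : Finset V)) (by simpa using hk)
  exact csSup_le ⟨_, T, hT, rfl⟩ fun _ ⟨T', hT', hx⟩ => hx ▸ h T' hT'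

lemma splittance_le_editDistance (G : SimpleGraph V) {H : SimpleGraph V} (hH : IsSplit H) :
    splittance G ≤ editDistance G H :=
  Nat.sInf_le ⟨H, hH, rfl⟩

variable [DecidableEq V]

lemma two_mul_edgesWithin (G : SimpleGraph V) [DecidableRel G.Adj] (S : Finset V) :
    2 * edgesWithin G S = #{x : V × V | G.Adj x.1 x.2 ∧ x.1 ∈ S ∧ x.2 ∈ S} := by
  classical
  let H := G.deleteEdges {e | ¬ ∀ v ∈ e, v ∈ S}
  have hH : #H.edgeFinset = edgesWithin G S := by
    unfold edgesWithin; congr 1; ext e; induction e; simp [H]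
  rw [← hH, two_mul_card_edgeFinset]
  congr 1; ext; simp [H]

lemma sum_degree_eq_card_adj (G : SimpleGraph V) [DecidableRel G.Adj] (S : Finset V) :
    ∑ v ∈ S, G.degree v = #{x : V × V | G.Adj x.1 x.2 ∧ x.1 ∈ S} := by
  rw [card_filter, Fintype.sum_prod_type]
  simp [and_comm (a := G.Adj _ _), ite_and, ← card_neighborFinset_eq_degree,
    neighborFinset_eq_filter]

/-- Count ordered pairs `(u, v)`: pointwise,
`[uv ∈ E, u ∈ S] + [uv ∈ E, v ∈ S] + [uv ∉ E, u ≠ v, u, v ∈ S] + [uv ∈ E, u, v ∉ S]`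
equals `[uv ∈ E] + [u ≠ v, u, v ∈ S]`. -/
theorem sum_degree_add_edgesWithin_compl_add_edgesWithin (G : SimpleGraph V) [DecidableRel G.Adj]
    (S : Finset V) :
    ∑ v ∈ S, G.degree v + edgesWithin Gᶜ S + edgesWithin G Sᶜ = numEdges G + (#S).choose 2 := by
  have hdeg : 2 * ∑ v ∈ S, G.degree v
      = #{x : V × V | G.Adj x.1 x.2 ∧ x.1 ∈ S} + #{x : V × V | G.Adj x.1 x.2 ∧ x.2 ∈ S} := by
    rw [two_mul, sum_degree_eq_card_adj]
    congr 1
    exact card_equiv (Equiv.prodComm V V) (by simp [G.adj_comm])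
  have hoff : #S.offDiag = #{x : V × V | x.1 ∈ S ∧ x.2 ∈ S ∧ x.1 ≠ x.2} := by
    congr 1; ext; simp
  apply Nat.eq_of_mul_eq_mul_left two_pos
  rw [mul_add, mul_add, mul_add, hdeg, two_mul_edgesWithin, two_mul_edgesWithin, two_mul_numEdges,
    ← offDiag_card_eq_two_mul_choose_two, hoff]
  simp only [card_filter, ← sum_add_distrib]
  refine sum_congr rfl fun x _ => ?_
  by_cases h : G.Adj x.1 x.2
  · have := G.ne_of_adj h
    by_cases h1 : x.1 ∈ S <;> by_cases h2 : x.2 ∈ S <;> simp [h, h1, h2, this]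
  · by_cases h1 : x.1 ∈ S <;> by_cases h2 : x.2 ∈ S <;> simp [h, h1, h2]

lemma lapEig_eq (G : SimpleGraph V) [DecidableRel G.Adj] :
    lapEig G = (lapMatrix_isHermitian G).eigenvalues := by
  unfold lapEig; congr!

lemma lapEig_le_card (G : SimpleGraph V) (i : V) : lapEig G i ≤ Fintype.card V := by
  classical
  set b := (lapMatrix_isHermitian G).eigenvectorBasis
  have := G.dotProduct_lapMatrix_mulVec_le (b i)
  rwa [b.sum_apply_sq, mul_one, ← Matrix.IsHermitian.eigenvalues_eq_dotProduct, ← lapEig_eq] at this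

/-- In `λᵢ = ∑ᵥ deg v · bᵢ(v)² - bᵢᵀ A bᵢ`, the weights `∑_{i ∈ T} bᵢ(v)²` lie in `[0, 1]` and
add up to `#T = #S`, so the degree part is at most `∑_{v ∈ S} deg v`; by Cauchy–Schwarz the
adjacency part is at most `√(#T ‖A‖_F²)`. -/
theorem sum_lapEig_le (G : SimpleGraph V) [DecidableRel G.Adj] {S T : Finset V}
    (hTS : #T = #S) (hdeg : ∀ v ∈ S, ∀ w ∉ S, G.degree w ≤ G.degree v) :
    ∑ i ∈ T, lapEig G i ≤ ∑ v ∈ S, (G.degree v : ℝ) + √(#T * (2 * numEdges G)) := by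
  set hL := lapMatrix_isHermitian G
  set b := hL.eigenvectorBasis
  have heig : ∀ i, hL.eigenvalues i = ∑ v, G.degree v * b i v ^ 2 - b i ⬝ᵥ (G.adjMatrix ℝ *ᵥ b i) :=
    fun i => by rw [hL.eigenvalues_eq_dotProduct, G.dotProduct_lapMatrix_mulVec]
  have hdiag : ∑ i ∈ T, ∑ v, (G.degree v : ℝ) * b i v ^ 2 ≤ ∑ v ∈ S, (G.degree v : ℝ) := by
    rw [sum_comm]
    simp_rw [← mul_sum]
    refine sum_mul_le_sum_of_sum_eq_card S (fun v => sum_nonneg fun i _ => sq_nonneg _)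
      (fun v => ?_) ?_ fun v hv w hw => by exact_mod_cast hdeg v hv w hw
    · exact (sum_le_sum_of_subset_of_nonneg (subset_univ T) fun _ _ _ => sq_nonneg _).trans_eq
        (b.sum_sq_apply v)
    · rw [sum_comm]; simp [b.sum_apply_sq, hTS]
  have hadj : -∑ i ∈ T, b i ⬝ᵥ (G.adjMatrix ℝ *ᵥ b i) ≤ √(#T * (2 * numEdges G)) := by
    rw [numEdges_eq, ← G.sum_sum_adjMatrix_sq]
    exact (neg_le_abs _).trans (b.abs_sum_dotProduct_mulVec_le _ T)
  rw [lapEig_eq, sum_congr rfl fun i _ => heig i, sum_sub_distrib]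
  linarith

theorem edgesWithin_add_edgesWithin_add_card_lt_of_not_BC (G : SimpleGraph V) [DecidableRel G.Adj]
    {S : Finset V} (hS : #S ≤ Fintype.card V) (hdeg : ∀ v ∈ S, ∀ w ∉ S, G.degree w ≤ G.degree v)
    (hfail : ¬ BC G #S) :
    (edgesWithin Gᶜ S : ℝ) + edgesWithin G Sᶜ + #S < #S * √(2 * Fintype.card V) := by
  set k := #S
  have hfail' : (numEdges G : ℝ) + (k.choose 2 + k : ℕ) < sLap G k := by
    rw [BC, Nat.choose_succ_succ, Nat.choose_one_right, add_comm k] at hfail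
    exact not_le.mp hfail
  have hle_mul : sLap G k ≤ k * Fintype.card V := sumKLargest_le hS fun T hT => by
    simpa [hT] using sum_le_sum fun i (_ : i ∈ T) => lapEig_le_card G i
  have hle_deg : sLap G k ≤ ∑ v ∈ S, (G.degree v : ℝ) + √(k * (2 * numEdges G)) :=
    sumKLargest_le hS fun T hT => hT ▸ sum_lapEig_le G hT hdeg
  have hcount : ∑ v ∈ S, (G.degree v : ℝ) + edgesWithin Gᶜ S + edgesWithin G Sᶜ
      = numEdges G + k.choose 2 := by
    exact_mod_cast sum_degree_add_edgesWithin_compl_add_edgesWithin G S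
  push_cast at hfail'
  have hm : (numEdges G : ℝ) ≤ k * Fintype.card V := by
    linarith [Nat.cast_nonneg (α := ℝ) (k.choose 2), Nat.cast_nonneg (α := ℝ) k]
  have hsqrt : √(k * (2 * numEdges G)) ≤ k * √(2 * Fintype.card V) :=
    calc √(k * (2 * numEdges G)) ≤ √(k ^ 2 * (2 * Fintype.card V)) :=
          Real.sqrt_le_sqrt (by nlinarith [Nat.cast_nonneg (α := ℝ) k])
      _ = k * √(2 * Fintype.card V) := by
          rw [Real.sqrt_mul (sq_nonneg _), Real.sqrt_sq (Nat.cast_nonneg _)]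
  linarith

lemma editDistance_toSplit_le (G : SimpleGraph V) [DecidableRel G.Adj] (S : Finset V) :
    editDistance G (toSplit G S) ≤ edgesWithin G Sᶜ + edgesWithin Gᶜ S := by
  classical
  unfold editDistance edgesWithin
  refine (card_le_card fun e he => ?_).trans (card_union_le _ _)
  induction e with | _ u v => ?_
  simp only [mem_symmDiff, mem_edgeFinset, mem_edgeSet, toSplit_adj] at he
  simp only [mem_union, mem_filter, mem_edgeFinset, mem_edgeSet, Sym2.mem_iff, compl_adj,
    forall_eq_or_imp, forall_eq]
  by_cases hu : u ∈ S <;> by_cases hv : v ∈ S <;> by_cases huv : G.Adj u v <;>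
    simp_all [G.ne_of_adj]

end Finite

theorem almost_split_of_bc_fail_general {V : Type*} [Fintype V] [DecidableEq V] (G : SimpleGraph V)
    [DecidableRel G.Adj] (k : ℕ) (hk2 : k ≤ Fintype.card V)
    (S : Finset V) (hcard : S.card = k)
    (hdeg : ∀ v ∈ S, ∀ w ∉ S, G.degree w ≤ G.degree v)
    (hfail : ¬ BC G k) (n : ℝ) (hn : n = (Fintype.card V : ℝ)) :
    (edgesWithin Gᶜ S : ℝ) ≤ (k : ℝ) * Real.sqrt (2 * n) - (k : ℝ) ∧
    (edgesWithin G Sᶜ : ℝ) ≤ (k : ℝ) * Real.sqrt (2 * n) - (k : ℝ) ∧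
    (∃ H : SimpleGraph V, H.IsClique (↑S : Set V) ∧ Hᶜ.IsClique ((↑S : Set V)ᶜ) ∧
      (editDistance G H : ℝ) ≤ (k : ℝ) * Real.sqrt (8 * n) - 2 * (k : ℝ)) ∧
    (splittance G : ℝ) < (k : ℝ) * Real.sqrt (8 * n) := by
  subst hcard hn
  have hkey := edgesWithin_add_edgesWithin_add_card_lt_of_not_BC G hk2 hdeg hfail
  have hsqrt8 : √(8 * Fintype.card V) = 2 * √(2 * Fintype.card V) := by
    rw [show (8 : ℝ) * Fintype.card V = 2 ^ 2 * (2 * Fintype.card V) by ring,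
      Real.sqrt_mul (sq_nonneg _), Real.sqrt_sq zero_le_two]
  have hedit : (editDistance G (toSplit G S) : ℝ) ≤ edgesWithin G Sᶜ + edgesWithin Gᶜ S := by
    exact_mod_cast editDistance_toSplit_le G S
  have hsplit : (splittance G : ℝ) ≤ editDistance G (toSplit G S) := by
    exact_mod_cast
      splittance_le_editDistance G ⟨S, isClique_toSplit G S, isClique_compl_toSplit G S⟩
  have hP : (0 : ℝ) ≤ edgesWithin Gᶜ S := Nat.cast_nonneg _
  have hQ : (0 : ℝ) ≤ edgesWithin G Sᶜ := Nat.cast_nonneg _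
  have hbound : (0 : ℝ) ≤ #S * √(2 * Fintype.card V) := by positivity
  rw [hsqrt8]
  exact ⟨by linarith, by linarith,
    ⟨toSplit G S, isClique_toSplit G S, isClique_compl_toSplit G S, by linarith⟩, by linarith⟩

/-- if `BC_k(G)` fails and `S_k` is a set of `k` vertices of largest degrees,
then the non-edges inside `S_k` and the edges outside `S_k` each number at most
`k√(2n) - k`; consequently some split graph with clique side `S_k` and independent side
`V∖S_k` differs from `G` in at most `k√(8n) - 2k` edges, and `σ(G) < k√(8n)`. -/
theorem almost_split_of_bc_fail {V : Type*} [Fintype V] [DecidableEq V] (G : SimpleGraph V)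
    [DecidableRel G.Adj] (k : ℕ) (hk1 : 1 ≤ k) (hk2 : k ≤ Fintype.card V)
    (S : Finset V) (hcard : S.card = k)
    (hdeg : ∀ v ∈ S, ∀ w ∉ S, G.degree w ≤ G.degree v)
    (hfail : ¬ BC G k) (n : ℝ) (hn : n = (Fintype.card V : ℝ)) :
    (edgesWithin Gᶜ S : ℝ) ≤ (k : ℝ) * Real.sqrt (2 * n) - (k : ℝ) ∧
    (edgesWithin G Sᶜ : ℝ) ≤ (k : ℝ) * Real.sqrt (2 * n) - (k : ℝ) ∧
    (∃ H : SimpleGraph V, H.IsClique (↑S : Set V) ∧ Hᶜ.IsClique ((↑S : Set V)ᶜ) ∧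
      (editDistance G H : ℝ) ≤ (k : ℝ) * Real.sqrt (8 * n) - 2 * (k : ℝ)) ∧
    (splittance G : ℝ) < (k : ℝ) * Real.sqrt (8 * n) :=
  almost_split_of_bc_fail_general G k hk2 S hcard hdeg hfail n hn

end Brouwer
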